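/- arXiv:0708.1820 — 4 statements merged into one kernel-verified Lean document; each statement's English description precedes it below -/
import Mathlib

section
/- If (β_l⁰, β_u⁰, d⁰) minimizes E[Y - β_l·1(X ≤ d) - β_u·1(X > d)]² over all (β_l, β_u, d), and the minimizer is an interior stationary point with the regression function f continuous at d⁰ and p_X(d⁰) > 0, then β_l⁰ = E(Y | X ≤ d⁰), β_u⁰ = E(Y | X > d⁰), and f(d⁰) = (β_l⁰ + β_u⁰)/2. -/
/-!
Write `J(d) = E[2Y - β_l⁰ - β_u⁰; X ≤ d]`. Pointwise, the stump loss at `(β_l⁰, β_u⁰, d)` is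
`(Y - β_u⁰)² + 1(X ≤ d) (β_u⁰ - β_l⁰)(2Y - β_l⁰ - β_u⁰)`, so the risk is
`E(Y - β_u⁰)² + (β_u⁰ - β_l⁰) J(d)`. Transporting to the law of `X` gives
`J(d) = ∫_{-∞}^d p_X (2f - β_l⁰ - β_u⁰)`, whose derivative at `d⁰` is
`p_X(d⁰)(2f(d⁰) - β_l⁰ - β_u⁰)`, and Fermat's theorem at the minimum `d⁰` makes it vanish when
`β_l⁰ ≠ β_u⁰`. When `β_l⁰ = β_u⁰` the stump is constant and optimality of the level `β_l⁰` for
every split `d` makes `J` identically zero. The level equations are the first-order conditions of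
`b ↦ E[(Y - b)²; A]`; both cells have positive probability because `p_X` is continuous and
positive at `d⁰`.
-/

open MeasureTheory ProbabilityTheory Set Filter

section SquaredError

variable {Ω : Type*} [MeasurableSpace Ω] {μ : Measure Ω} [IsFiniteMeasure μ] {Y : Ω → ℝ}

lemma setIntegral_sub_sq (hY : MemLp Y 2 μ) (s : Set Ω) (b : ℝ) :
    ∫ ω in s, (Y ω - b) ^ 2 ∂μ
      = ∫ ω in s, Y ω ^ 2 ∂μ - 2 * b * ∫ ω in s, Y ω ∂μ + b ^ 2 * μ.real s := by
  have hY1 : IntegrableOn Y s μ := (hY.integrable one_le_two).integrableOn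
  have hY2 : IntegrableOn (fun ω => Y ω ^ 2) s μ := hY.integrable_sq.integrableOn
  have hlin : IntegrableOn (fun ω => Y ω ^ 2 - 2 * Y ω * b) s μ :=
    hY2.sub ((hY1.const_mul 2).mul_const b)
  simp_rw [sub_sq', ← sub_add_eq_add_sub]
  rw [integral_add hlin (integrableOn_const (measure_lt_top _ _).ne),
    integral_sub hY2 ((hY1.const_mul 2).mul_const b), integral_mul_const, integral_const_mul,
    setIntegral_const, smul_eq_mul]
  ring

lemma setIntegral_eq_mul_measureReal_of_isMinOn (hY : MemLp Y 2 μ) (s : Set Ω) {b₀ : ℝ}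
    (hmin : IsMinOn (fun b => ∫ ω in s, (Y ω - b) ^ 2 ∂μ) univ b₀) :
    ∫ ω in s, Y ω ∂μ = b₀ * μ.real s := by
  have hderiv : HasDerivAt (fun b => ∫ ω in s, (Y ω - b) ^ 2 ∂μ)
      (2 * (b₀ * μ.real s - ∫ ω in s, Y ω ∂μ)) b₀ := by
    have h := ((((hasDerivAt_id b₀).const_mul 2).mul_const (∫ ω in s, Y ω ∂μ)).const_sub
      (∫ ω in s, Y ω ^ 2 ∂μ)).add ((hasDerivAt_pow 2 b₀).mul_const (μ.real s))
    refine (h.congr_deriv (by norm_num; ring)).congr_of_eventuallyEq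
      (Eventually.of_forall fun b => ?_)
    simp [setIntegral_sub_sq hY s]
  linarith [(hmin.isLocalMin univ_mem).hasDerivAt_eq_zero hderiv]

end SquaredError

section StumpRisk

variable {Ω : Type*} [MeasurableSpace Ω]

noncomputable def stumpRisk (μ : Measure Ω) (X Y : Ω → ℝ) (bl bu d : ℝ) : ℝ :=
  ∫ ω, (Y ω - (if X ω ≤ d then bl else bu)) ^ 2 ∂μ

variable {μ : Measure Ω} [IsFiniteMeasure μ] {X Y : Ω → ℝ}

lemma stumpRisk_eq_setIntegral_add (hX : Measurable X) (hY : MemLp Y 2 μ) (bl bu d : ℝ) :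
    stumpRisk μ X Y bl bu d
      = ∫ ω in X ⁻¹' Iic d, (Y ω - bl) ^ 2 ∂μ + ∫ ω in X ⁻¹' Ioi d, (Y ω - bu) ^ 2 ∂μ := by
  have hsq (b : ℝ) : Integrable (fun ω => (Y ω - b) ^ 2) μ := (hY.sub (memLp_const b)).integrable_sq
  have hl : MeasurableSet (X ⁻¹' Iic d) := hX measurableSet_Iic
  have hu : MeasurableSet (X ⁻¹' Ioi d) := hX measurableSet_Ioi
  rw [← integral_indicator hl, ← integral_indicator hu,
    ← integral_add ((hsq bl).indicator hl) ((hsq bu).indicator hu)]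
  refine integral_congr_ae (Eventually.of_forall fun ω => ?_)
  by_cases h : X ω ≤ d <;> simp [h, indicator]

lemma stumpRisk_eq_add_mul (hX : Measurable X) (hY : MemLp Y 2 μ) (bl bu d : ℝ) :
    stumpRisk μ X Y bl bu d
      = ∫ ω, (Y ω - bu) ^ 2 ∂μ + (bu - bl) * ∫ ω in X ⁻¹' Iic d, (2 * Y ω - (bl + bu)) ∂μ := by
  have hl : MeasurableSet (X ⁻¹' Iic d) := hX measurableSet_Iic
  have hsq : Integrable (fun ω => (Y ω - bu) ^ 2) μ := (hY.sub (memLp_const bu)).integrable_sq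
  have hlin : Integrable (fun ω => (bu - bl) * (2 * Y ω - (bl + bu))) μ :=
    (((hY.integrable one_le_two).const_mul 2).sub (integrable_const _)).const_mul _
  rw [← integral_const_mul, ← integral_indicator hl, ← integral_add hsq (hlin.indicator hl)]
  refine integral_congr_ae (Eventually.of_forall fun ω => ?_)
  by_cases h : X ω ≤ d
  · simp only [h, ↓reduceIte, indicator, mem_preimage, mem_Iic]
    ring
  · simp [h, indicator]

lemma setIntegral_Iic_eq_of_forall_stumpRisk_le (hX : Measurable X) (hY : MemLp Y 2 μ)
    {bl bu d : ℝ} (h : ∀ b, stumpRisk μ X Y bl bu d ≤ stumpRisk μ X Y b bu d) :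
    ∫ ω in X ⁻¹' Iic d, Y ω ∂μ = bl * μ.real (X ⁻¹' Iic d) :=
  setIntegral_eq_mul_measureReal_of_isMinOn hY _ fun b _ => by
    have := h b
    rw [stumpRisk_eq_setIntegral_add hX hY, stumpRisk_eq_setIntegral_add hX hY] at this
    simpa using this

lemma setIntegral_Ioi_eq_of_forall_stumpRisk_le (hX : Measurable X) (hY : MemLp Y 2 μ)
    {bl bu d : ℝ} (h : ∀ b, stumpRisk μ X Y bl bu d ≤ stumpRisk μ X Y bl b d) :
    ∫ ω in X ⁻¹' Ioi d, Y ω ∂μ = bu * μ.real (X ⁻¹' Ioi d) :=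
  setIntegral_eq_mul_measureReal_of_isMinOn hY _ fun b _ => by
    have := h b
    rw [stumpRisk_eq_setIntegral_add hX hY, stumpRisk_eq_setIntegral_add hX hY] at this
    simpa using this

lemma eq_zero_of_hasDerivAt_of_forall_stumpRisk_le (hX : Measurable X) (hY : MemLp Y 2 μ)
    {bl bu d₀ D : ℝ} (hmin : ∀ bl' bu' d, stumpRisk μ X Y bl bu d₀ ≤ stumpRisk μ X Y bl' bu' d)
    (hJ : HasDerivAt (fun d => ∫ ω in X ⁻¹' Iic d, (2 * Y ω - (bl + bu)) ∂μ) D d₀) : D = 0 := by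
  rcases eq_or_ne bl bu with rfl | hne
  · have hconst (d : ℝ) : stumpRisk μ X Y bl bl d = stumpRisk μ X Y bl bl d₀ := by
      simp [stumpRisk]
    have hJ0 : (fun d => ∫ ω in X ⁻¹' Iic d, (2 * Y ω - (bl + bl)) ∂μ) = fun _ => 0 := by
      ext d
      have hmean := setIntegral_Iic_eq_of_forall_stumpRisk_le hX hY
        fun b => (hconst d).trans_le (hmin b bl d)
      rw [integral_sub ((hY.integrable one_le_two).integrableOn.const_mul 2)
        (integrableOn_const (measure_ne_top _ _)), integral_const_mul, hmean, setIntegral_const,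
        smul_eq_mul]
      ring
    exact hJ.unique (hJ0 ▸ hasDerivAt_const _ _)
  · have hlocmin : IsLocalMin (stumpRisk μ X Y bl bu) d₀ :=
      IsMinOn.isLocalMin (fun d _ => hmin bl bu d) univ_mem
    have hderiv : HasDerivAt (stumpRisk μ X Y bl bu) ((bu - bl) * D) d₀ := by
      simp_rw [funext (stumpRisk_eq_add_mul hX hY bl bu)]
      exact (hJ.const_mul _).const_add _
    exact (mul_eq_zero.1 (hlocmin.hasDerivAt_eq_zero hderiv)).resolve_left (sub_ne_zero.2 hne.symm)

end StumpRisk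

lemma hasDerivAt_setIntegral_Iic {h : ℝ → ℝ} (hh : Integrable h) {a : ℝ} (ha : ContinuousAt h a) :
    HasDerivAt (fun d => ∫ x in Iic d, h x) (h a) a := by
  have hsplit : (fun d => ∫ x in Iic d, h x) = fun d => (∫ x in Iic a, h x) + ∫ x in a..d, h x := by
    ext d
    rw [← intervalIntegral.integral_Iic_sub_Iic hh.integrableOn hh.integrableOn]
    ring
  rw [hsplit]
  exact (intervalIntegral.integral_hasDerivAt_right hh.intervalIntegrable
    hh.aestronglyMeasurable.stronglyMeasurableAtFilter ha).const_add _

section Density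

variable {Ω : Type*} [MeasurableSpace Ω] {μ : Measure Ω} {X : Ω → ℝ} {p : ℝ → ℝ}

lemma setIntegral_preimage_eq_setIntegral_density_mul (hX : AEMeasurable X μ)
    (hp : Measurable p) (hp0 : ∀ x, 0 ≤ p x)
    (hdens : μ.map X = volume.withDensity fun x => ENNReal.ofReal (p x))
    {φ : ℝ → ℝ} (hφ : AEStronglyMeasurable φ (μ.map X)) {s : Set ℝ} (hs : MeasurableSet s) :
    ∫ ω in X ⁻¹' s, φ (X ω) ∂μ = ∫ x in s, p x * φ x := by
  rw [← setIntegral_map hs hφ hX, hdens, setIntegral_withDensity_eq_setIntegral_toReal_smul' s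
    hp.ennreal_ofReal (ae_of_all _ fun _ => ENNReal.ofReal_lt_top)]
  simp [ENNReal.toReal_ofReal (hp0 _)]

lemma integrable_density_mul (hp : Measurable p) (hp0 : ∀ x, 0 ≤ p x)
    (hdens : μ.map X = volume.withDensity fun x => ENNReal.ofReal (p x))
    {φ : ℝ → ℝ} (hφ : Integrable φ (μ.map X)) : Integrable fun x => p x * φ x := by
  rw [hdens, integrable_withDensity_iff_integrable_smul' hp.ennreal_ofReal
    (ae_of_all _ fun _ => ENNReal.ofReal_lt_top)] at hφ
  simpa [ENNReal.toReal_ofReal (hp0 _)] using hφ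

lemma withDensity_ofReal_pos {α : Type*} [TopologicalSpace α] [MeasurableSpace α]
    [OpensMeasurableSpace α] {ν : Measure α} [ν.IsOpenPosMeasure] {p : α → ℝ} (hp : Continuous p)
    {s : Set α} {x : α} (hx : x ∈ closure (interior s)) (hpx : 0 < p x) :
    0 < ν.withDensity (fun y => ENNReal.ofReal (p y)) s := by
  have hpos : IsOpen {y | 0 < p y} := isOpen_lt continuous_const hp
  obtain ⟨y, hy⟩ := mem_closure_iff.1 hx _ hpos hpx
  have hV : 0 < ν ({y | 0 < p y} ∩ interior s) := (hpos.inter isOpen_interior).measure_pos ν ⟨y, hy⟩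
  rw [pos_iff_ne_zero, Ne, withDensity_apply_eq_zero' hp.measurable.ennreal_ofReal.aemeasurable]
  refine (hV.trans_le (measure_mono ?_)).ne'
  exact inter_subset_inter (fun y hy => by simpa using hy) interior_subset

lemma measureReal_preimage_pos [IsFiniteMeasure μ] (hX : Measurable X) (hp : Continuous p)
    (hdens : μ.map X = volume.withDensity fun x => ENNReal.ofReal (p x))
    {s : Set ℝ} (hs : MeasurableSet s) {x : ℝ} (hpx : 0 < p x) (hx : x ∈ closure (interior s)) :
    0 < μ.real (X ⁻¹' s) := by
  rw [measureReal_def, ← Measure.map_apply hX hs]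
  exact ENNReal.toReal_pos (hdens ▸ withDensity_ofReal_pos hp hx hpx).ne' (measure_ne_top _ _)

lemma setIntegral_preimage_two_mul_sub_eq [IsFiniteMeasure μ] (hX : Measurable X) {Y : Ω → ℝ}
    (hY : Integrable Y μ) {f : ℝ → ℝ} (hfm : Measurable f) (hfX : Integrable (fun ω => f (X ω)) μ)
    (hp : Measurable p) (hp0 : ∀ x, 0 ≤ p x)
    (hdens : μ.map X = volume.withDensity fun x => ENNReal.ofReal (p x))
    {s : Set ℝ} (hs : MeasurableSet s)
    (hreg : ∫ ω in X ⁻¹' s, Y ω ∂μ = ∫ ω in X ⁻¹' s, f (X ω) ∂μ) (c : ℝ) :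
    ∫ ω in X ⁻¹' s, (2 * Y ω - c) ∂μ = ∫ x in s, p x * (2 * f x - c) := by
  have hfin := measure_ne_top μ (X ⁻¹' s)
  rw [← setIntegral_preimage_eq_setIntegral_density_mul (φ := fun x => 2 * f x - c)
      hX.aemeasurable hp hp0 hdens ((hfm.const_mul 2).sub measurable_const).aestronglyMeasurable hs,
    integral_sub (hY.integrableOn.const_mul 2) (integrableOn_const hfin),
    integral_sub (hfX.integrableOn.const_mul 2) (integrableOn_const hfin),
    integral_const_mul, integral_const_mul, hreg]

end Density

theorem stmt0_general {Ω : Type*} [MeasureSpace Ω] [IsProbabilityMeasure (ℙ : Measure Ω)]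
    (X Y : Ω → ℝ) (hX : Measurable X) (hY2 : MemLp Y 2 ℙ)
    (f pX : ℝ → ℝ) (hfm : Measurable f)
    (hfX : Integrable (fun ω => f (X ω)) ℙ)
    (hreg : ∀ s : Set ℝ, MeasurableSet s →
      (∫ ω in X ⁻¹' s, Y ω ∂ℙ) = ∫ ω in X ⁻¹' s, f (X ω) ∂ℙ)
    (hpc : Continuous pX) (hp0 : ∀ x, 0 ≤ pX x)
    (hdens : Measure.map X ℙ
      = (volume : Measure ℝ).withDensity fun x => ENNReal.ofReal (pX x))
    (βl0 βu0 d0 : ℝ) (hfc : ContinuousAt f d0) (hpd : 0 < pX d0)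
    (hmin : ∀ bl bu d : ℝ,
      (∫ ω, (Y ω - (if X ω ≤ d0 then βl0 else βu0)) ^ 2 ∂ℙ)
        ≤ ∫ ω, (Y ω - (if X ω ≤ d then bl else bu)) ^ 2 ∂ℙ) :
    βl0 = (∫ ω, (if X ω ≤ d0 then Y ω else 0) ∂ℙ) / (ℙ (X ⁻¹' Set.Iic d0)).toReal ∧
    βu0 = (∫ ω, (if X ω ≤ d0 then 0 else Y ω) ∂ℙ) / (ℙ (X ⁻¹' Set.Ioi d0)).toReal ∧
    f d0 = (βl0 + βu0) / 2 := by
  have hPl : 0 < (ℙ : Measure Ω).real (X ⁻¹' Iic d0) :=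
    measureReal_preimage_pos hX hpc hdens measurableSet_Iic hpd (by simp)
  have hPu : 0 < (ℙ : Measure Ω).real (X ⁻¹' Ioi d0) :=
    measureReal_preimage_pos hX hpc hdens measurableSet_Ioi hpd (by simp)
  have hl := setIntegral_Iic_eq_of_forall_stumpRisk_le hX hY2 fun b => hmin b βu0 d0
  have hu := setIntegral_Ioi_eq_of_forall_stumpRisk_le hX hY2 fun b => hmin βl0 b d0
  refine ⟨?_, ?_, ?_⟩
  · rw [← measureReal_def, eq_div_iff hPl.ne', ← hl, ← integral_indicator (hX measurableSet_Iic)]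
    rfl
  · rw [← measureReal_def, eq_div_iff hPu.ne', ← hu, ← integral_indicator (hX measurableSet_Ioi)]
    simp only [indicator, mem_preimage, mem_Ioi, ← not_le, ite_not]
  have hfX' : Integrable (fun x => 2 * f x - (βl0 + βu0)) ((ℙ : Measure Ω).map X) :=
    ((integrable_map_measure hfm.aestronglyMeasurable hX.aemeasurable).2 hfX |>.const_mul 2).sub
      (integrable_const _)
  have hJ : HasDerivAt (fun d => ∫ ω in X ⁻¹' Iic d, (2 * Y ω - (βl0 + βu0)) ∂ℙ)
      (pX d0 * (2 * f d0 - (βl0 + βu0))) d0 := by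
    simp_rw [setIntegral_preimage_two_mul_sub_eq hX (hY2.integrable one_le_two) hfm hfX
      hpc.measurable hp0 hdens measurableSet_Iic (hreg _ measurableSet_Iic)]
    exact hasDerivAt_setIntegral_Iic (integrable_density_mul hpc.measurable hp0 hdens hfX')
      (hpc.continuousAt.mul ((hfc.const_mul 2).sub continuousAt_const))
  have hstat := eq_zero_of_hasDerivAt_of_forall_stumpRisk_le hX hY2 hmin hJ
  have := (mul_eq_zero.1 hstat).resolve_left hpd.ne'
  linarith

/-- the normal equations. If `(β_l⁰, β_u⁰, d⁰)` minimizes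
`E[Y - β_l 1(X ≤ d) - β_u 1(X > d)]²` over all `(β_l, β_u, d)`, the regression function
`f` (a version of `E(Y | X = ·)`) is continuous at `d⁰`, and the density `p_X` of `X` is
continuous with `p_X(d⁰) > 0`, then `β_l⁰ = E(Y | X ≤ d⁰)`, `β_u⁰ = E(Y | X > d⁰)`, and
`f(d⁰) = (β_l⁰ + β_u⁰)/2`. -/
theorem stmt0 {Ω : Type*} [MeasureSpace Ω] [IsProbabilityMeasure (ℙ : Measure Ω)]
    (X Y : Ω → ℝ) (hX : Measurable X) (hYm : Measurable Y) (hY2 : MemLp Y 2 ℙ)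
    (f pX : ℝ → ℝ) (hfm : Measurable f)
    (hfX : Integrable (fun ω => f (X ω)) ℙ)
    (hreg : ∀ s : Set ℝ, MeasurableSet s →
      (∫ ω in X ⁻¹' s, Y ω ∂ℙ) = ∫ ω in X ⁻¹' s, f (X ω) ∂ℙ)
    (hpc : Continuous pX) (hp0 : ∀ x, 0 ≤ pX x)
    (hdens : Measure.map X ℙ
      = (volume : Measure ℝ).withDensity fun x => ENNReal.ofReal (pX x))
    (βl0 βu0 d0 : ℝ) (hfc : ContinuousAt f d0) (hpd : 0 < pX d0)
    (hmin : ∀ bl bu d : ℝ,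
      (∫ ω, (Y ω - (if X ω ≤ d0 then βl0 else βu0)) ^ 2 ∂ℙ)
        ≤ ∫ ω, (Y ω - (if X ω ≤ d then bl else bu)) ^ 2 ∂ℙ) :
    βl0 = (∫ ω, (if X ω ≤ d0 then Y ω else 0) ∂ℙ) / (ℙ (X ⁻¹' Set.Iic d0)).toReal ∧
    βu0 = (∫ ω, (if X ω ≤ d0 then 0 else Y ω) ∂ℙ) / (ℙ (X ⁻¹' Set.Ioi d0)).toReal ∧
    f d0 = (βl0 + βu0) / 2 :=
  stmt0_general X Y hX hY2 f pX hfm hfX hreg hpc hp0 hdens βl0 βu0 d0 hfc hpd hmin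
end

section
/- For any d, the identity ξ(d⁰) - ξ(d) = 2(β_l⁰ - β_u⁰)·M(d) holds, where ξ(d) = E[Y - β_l⁰·1(X ≤ d) - β_u⁰·1(X > d)]² and M(d) = E[(Y - (β_l⁰+β_u⁰)/2)(1(X ≤ d) - 1(X ≤ d⁰))]. Hence if β_l⁰ > β_u⁰ and d⁰ is the unique minimizer of ξ, then d⁰ is the unique maximizer of M. -/
open MeasureTheory ProbabilityTheory

/-!
Pointwise, `(y - β(d⁰))² - (y - β(d))²` vanishes unless exactly one of `x ≤ d`, `x ≤ d⁰`
holds, and then it equals `±(β_l⁰ - β_u⁰)(2y - β_l⁰ - β_u⁰)`, which is the integrand of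
`2(β_l⁰ - β_u⁰) M(d)`. Integrating gives the identity, and since `M(d⁰) = 0` it turns
"`ξ(d⁰) < ξ(d)`" into "`M(d) < M(d⁰)`" as soon as `β_l⁰ - β_u⁰ > 0`.
-/

lemma sq_sub_ite_sub_sq_sub_ite (x y a b d d0 : ℝ) :
    (y - (if x ≤ d0 then a else b)) ^ 2 - (y - (if x ≤ d then a else b)) ^ 2
      = 2 * (a - b) * ((y - (a + b) / 2)
        * ((if x ≤ d then (1 : ℝ) else 0) - (if x ≤ d0 then (1 : ℝ) else 0))) := by
  by_cases hd0 : x ≤ d0 <;> by_cases hd : x ≤ d <;>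
    simp only [hd0, hd, if_true, if_false] <;> ring

section StepFunction

variable {Ω : Type*} [MeasurableSpace Ω] {μ : Measure Ω} [IsFiniteMeasure μ]
  {X Y : Ω → ℝ}

lemma memLp_ite_le (hX : Measurable X) (p : ENNReal) (a b d : ℝ) :
    MemLp (fun ω => if X ω ≤ d then a else b) p μ := by
  have hmeas : Measurable fun ω => if X ω ≤ d then a else b :=
    measurable_const.ite (hX measurableSet_Iic) measurable_const
  refine .of_bound hmeas.aestronglyMeasurable (max |a| |b|) (.of_forall fun ω => ?_)
  split_ifs
  · exact le_max_left _ _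
  · exact le_max_right _ _

lemma integrable_sq_sub_ite_le (hX : Measurable X) (hY : MemLp Y 2 μ) (a b d : ℝ) :
    Integrable (fun ω => (Y ω - if X ω ≤ d then a else b) ^ 2) μ :=
  (hY.sub (memLp_ite_le hX 2 a b d)).integrable_sq

lemma integral_sq_sub_ite_sub_integral_sq_sub_ite (hX : Measurable X) (hY : MemLp Y 2 μ)
    (a b d d0 : ℝ) :
    ∫ ω, (Y ω - (if X ω ≤ d0 then a else b)) ^ 2 ∂μ
        - ∫ ω, (Y ω - (if X ω ≤ d then a else b)) ^ 2 ∂μ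
      = 2 * (a - b) * ∫ ω, (Y ω - (a + b) / 2) *
        ((if X ω ≤ d then (1 : ℝ) else 0) - (if X ω ≤ d0 then (1 : ℝ) else 0)) ∂μ := by
  rw [← integral_sub (integrable_sq_sub_ite_le hX hY a b d0)
    (integrable_sq_sub_ite_le hX hY a b d), ← integral_const_mul]
  exact integral_congr_ae (.of_forall fun ω => sq_sub_ite_sub_sq_sub_ite (X ω) (Y ω) a b d d0)

end StepFunction

theorem stmt2_general {Ω : Type*} [MeasureSpace Ω] [IsProbabilityMeasure (ℙ : Measure Ω)]
    (X Y : Ω → ℝ) (hX : Measurable X) (hY : MemLp Y 2 ℙ)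
    (βl0 βu0 d0 : ℝ) (ξ M : ℝ → ℝ)
    (hξ : ∀ d, ξ d = ∫ ω, (Y ω - (if X ω ≤ d then βl0 else βu0)) ^ 2 ∂ℙ)
    (hM : ∀ d, M d = ∫ ω, (Y ω - (βl0 + βu0) / 2)
        * ((if X ω ≤ d then (1 : ℝ) else 0) - (if X ω ≤ d0 then (1 : ℝ) else 0)) ∂ℙ) :
    (∀ d, ξ d0 - ξ d = 2 * (βl0 - βu0) * M d) ∧
    ((βu0 < βl0 ∧ ∀ d, d ≠ d0 → ξ d0 < ξ d) → ∀ d, d ≠ d0 → M d < M d0) := by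
  have hdiff : ∀ d, ξ d0 - ξ d = 2 * (βl0 - βu0) * M d := fun d => by
    rw [hξ, hξ, hM]
    exact integral_sq_sub_ite_sub_integral_sq_sub_ite hX hY βl0 βu0 d d0
  refine ⟨hdiff, fun ⟨hlt, hmin⟩ d hd => ?_⟩
  have hM0 : M d0 = 0 := by simp [hM]
  have hneg : 2 * (βl0 - βu0) * M d < 0 := hdiff d ▸ sub_neg.mpr (hmin d hd)
  exact hM0 ▸ neg_of_mul_neg_right hneg (by linarith)

/-- the identity `ξ(d⁰) - ξ(d) = 2(β_l⁰ - β_u⁰) M(d)`, where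
`ξ(d) = E[Y - β_l⁰ 1(X ≤ d) - β_u⁰ 1(X > d)]²` and
`M(d) = E[(Y - (β_l⁰+β_u⁰)/2)(1(X ≤ d) - 1(X ≤ d⁰))]`; consequently, if `β_l⁰ > β_u⁰`
and `d⁰` is the unique minimizer of `ξ`, then `d⁰` is the unique maximizer of `M`. -/
theorem stmt2 {Ω : Type*} [MeasureSpace Ω] [IsProbabilityMeasure (ℙ : Measure Ω)]
    (X Y : Ω → ℝ) (hX : Measurable X) (hY : MemLp Y 2 ℙ)
    (βl0 βu0 d0 : ℝ) (hne : βl0 ≠ βu0) (ξ M : ℝ → ℝ)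
    (hξ : ∀ d, ξ d = ∫ ω, (Y ω - (if X ω ≤ d then βl0 else βu0)) ^ 2 ∂ℙ)
    (hM : ∀ d, M d = ∫ ω, (Y ω - (βl0 + βu0) / 2)
        * ((if X ω ≤ d then (1 : ℝ) else 0) - (if X ω ≤ d0 then (1 : ℝ) else 0)) ∂ℙ) :
    (∀ d, ξ d0 - ξ d = 2 * (βl0 - βu0) * M d) ∧
    ((βu0 < βl0 ∧ ∀ d, d ≠ d0 → ξ d0 < ξ d) → ∀ d, d ≠ d0 → M d < M d0) :=
  stmt2_general X Y hX hY βl0 βu0 d0 ξ M hξ hM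
end

section
/- Suppose f = E(Y|X=·) and p_X are such that M(d) = ∫_{-∞}^{d}(f(x) - f(d⁰))p_X(x)dx - ∫_{-∞}^{d⁰}(f(x) - f(d⁰))p_X(x)dx, with β_l⁰ = E(Y | X ≤ d⁰) > (β_l⁰+β_u⁰)/2 = f(d⁰) (i.e., β_l⁰ > β_u⁰). Then lim_{d→-∞} M(d) < 0 and lim_{d→+∞} M(d) < 0. -/
open MeasureTheory Filter Topology

/-- with
`M(d) = ∫_{-∞}^{d} (f(x) - f(d⁰)) p_X(x) dx - ∫_{-∞}^{d⁰} (f(x) - f(d⁰)) p_X(x) dx`,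
`β_l⁰ = E(Y | X ≤ d⁰)`, `β_u⁰ = E(Y | X > d⁰)` (expressed via the density `p_X`),
`f(d⁰) = (β_l⁰ + β_u⁰)/2` and `β_l⁰ > β_u⁰`, the limits of `M` at `-∞` and `+∞` exist
and are both negative. -/
theorem stmt3 (f pX : ℝ → ℝ) (d0 βl0 βu0 : ℝ) (M : ℝ → ℝ)
    (hp0 : ∀ x, 0 ≤ pX x)
    (hpInt : Integrable pX)
    (hfpInt : Integrable (fun x => f x * pX x))
    (hF : 0 < ∫ x in Set.Iic d0, pX x)
    (hF' : 0 < ∫ x in Set.Ioi d0, pX x)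
    (hβl : βl0 = (∫ x in Set.Iic d0, f x * pX x) / ∫ x in Set.Iic d0, pX x)
    (hβu : βu0 = (∫ x in Set.Ioi d0, f x * pX x) / ∫ x in Set.Ioi d0, pX x)
    (hfd0 : f d0 = (βl0 + βu0) / 2)
    (hlt : βu0 < βl0)
    (hM : ∀ d, M d = (∫ x in Set.Iic d, (f x - f d0) * pX x)
        - ∫ x in Set.Iic d0, (f x - f d0) * pX x) :
    (∃ L1 : ℝ, Tendsto M atBot (𝓝 L1) ∧ L1 < 0) ∧
    (∃ L2 : ℝ, Tendsto M atTop (𝓝 L2) ∧ L2 < 0) := by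
  set g : ℝ → ℝ := fun x => (f x - f d0) * pX x with hg
  have hgInt : Integrable g := by
    have : g = fun x => f x * pX x - f d0 * pX x := by
      funext x; ring
    rw [this]
    exact hfpInt.sub (hpInt.const_mul _)
  -- value of the integral over Iic d0
  have hIic : ∫ x in Set.Iic d0, g x
      = (∫ x in Set.Iic d0, f x * pX x) - f d0 * ∫ x in Set.Iic d0, pX x := by
    have : ∀ x, g x = f x * pX x - f d0 * pX x := fun x => by simp [hg]; ring
    simp_rw [this]
    rw [integral_sub (hfpInt.integrableOn) ((hpInt.integrableOn).const_mul _),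
      integral_const_mul]
  have hIoi : ∫ x in Set.Ioi d0, g x
      = (∫ x in Set.Ioi d0, f x * pX x) - f d0 * ∫ x in Set.Ioi d0, pX x := by
    have : ∀ x, g x = f x * pX x - f d0 * pX x := fun x => by simp [hg]; ring
    simp_rw [this]
    rw [integral_sub (hfpInt.integrableOn) ((hpInt.integrableOn).const_mul _),
      integral_const_mul]
  have hIicpos : 0 < ∫ x in Set.Iic d0, g x := by
    rw [hIic]
    have h1 : (∫ x in Set.Iic d0, f x * pX x) = βl0 * ∫ x in Set.Iic d0, pX x := by
      rw [hβl]; field_simp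
    rw [h1, hfd0]
    have : βl0 - (βl0 + βu0) / 2 > 0 := by linarith
    nlinarith
  have hIoineg : (∫ x in Set.Ioi d0, g x) < 0 := by
    rw [hIoi]
    have h1 : (∫ x in Set.Ioi d0, f x * pX x) = βu0 * ∫ x in Set.Ioi d0, pX x := by
      rw [hβu]; field_simp
    rw [h1, hfd0]
    have : βu0 - (βl0 + βu0) / 2 < 0 := by linarith
    nlinarith
  have hsplit : ∀ d : ℝ, (∫ x in Set.Iic d, g x) + (∫ x in Set.Ioi d, g x) = ∫ x, g x := by
    intro d
    exact intervalIntegral.integral_Iic_add_Ioi hgInt.integrableOn hgInt.integrableOn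
  -- tendsto at top : ∫ Iic d → ∫ g
  have htop : Tendsto (fun d => ∫ x in Set.Iic d, g x) atTop (𝓝 (∫ x, g x)) := by
    have hφ : AECover (volume : Measure ℝ) atTop (fun d : ℝ => Set.Iic d) :=
      aecover_Iic tendsto_id
    exact hφ.integral_tendsto_of_countably_generated hgInt
  -- tendsto at bot : ∫ Ioi d → ∫ g, hence ∫ Iic d → 0
  have hbot' : Tendsto (fun d => ∫ x in Set.Ioi d, g x) atBot (𝓝 (∫ x, g x)) := by
    have hφ : AECover (volume : Measure ℝ) atBot (fun d : ℝ => Set.Ioi d) :=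
      aecover_Ioi tendsto_id
    exact hφ.integral_tendsto_of_countably_generated hgInt
  have hbot : Tendsto (fun d => ∫ x in Set.Iic d, g x) atBot (𝓝 0) := by
    have : (fun d => ∫ x in Set.Iic d, g x)
        = fun d => (∫ x, g x) - ∫ x in Set.Ioi d, g x := by
      funext d; have := hsplit d; linarith
    rw [this]
    have := (tendsto_const_nhds (x := ∫ x, g x) (f := atBot)).sub hbot'
    simpa using this
  constructor
  · refine ⟨-(∫ x in Set.Iic d0, g x), ?_, by linarith⟩
    have : M = fun d => (∫ x in Set.Iic d, g x) - ∫ x in Set.Iic d0, g x := by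
      funext d; exact hM d
    rw [this]
    simpa using hbot.sub (tendsto_const_nhds (x := ∫ x in Set.Iic d0, g x))
  · refine ⟨∫ x in Set.Ioi d0, g x, ?_, hIoineg⟩
    have : M = fun d => (∫ x in Set.Iic d, g x) - ∫ x in Set.Iic d0, g x := by
      funext d; exact hM d
    rw [this]
    have h := htop.sub (tendsto_const_nhds (x := ∫ x in Set.Iic d0, g x))
    have heq : (∫ x, g x) - ∫ x in Set.Iic d0, g x = ∫ x in Set.Ioi d0, g x := by
      have := hsplit d0; linarith
    rwa [heq] at h
end

section
/- Fix d⁰ ∈ ℝ, F₀ ∈ ℝ, and K > 0. The envelope function M_δ(x, y) = (|y| + |F₀| + 2)·1(x ∈ [d⁰ - δ, d⁰ + δ]) dominates pointwise every function in the class M_δ = {(y - F)(1(x ≤ d) - 1(x ≤ d⁰)) : |d - d⁰| ≤ δ, F ∈ [F₀ - 1, F₀ + 1]}, and if the conditional second moment x ↦ E[Y²|X=x] and p_X are bounded on [d⁰ - δ₀, d⁰ + δ₀], then E[M_δ(X, Y)²] ≤ C·δ for all δ < δ₀ and a constant C independent of δ. -/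
/-! Outside `[d⁰ - δ, d⁰ + δ]` the indicators `1(x ≤ d)` and `1(x ≤ d⁰)` agree, and inside it
`|y - F| ≤ |y| + |F₀| + 2`; this gives the domination. For the second moment, on the event
`X ∈ [d⁰ - δ, d⁰ + δ]` use `(|Y| + c)² ≤ 2Y² + 2c²`: the conditional second moment bound turns
the integral into a multiple of `P(X ∈ [d⁰ - δ, d⁰ + δ])`, which the density bound makes at most
`2 C_p δ`. -/

open MeasureTheory ProbabilityTheory Set

lemma ite_le_eq_ite_le_of_notMem_Icc {x d d0 δ : ℝ} (hd : |d - d0| ≤ δ)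
    (hx : x ∉ Icc (d0 - δ) (d0 + δ)) :
    (if x ≤ d then (1 : ℝ) else 0) = if x ≤ d0 then 1 else 0 := by
  rw [mem_Icc, not_and_or, not_le, not_le] at hx
  obtain ⟨hd1, hd2⟩ := abs_le.mp hd
  rcases hx with hx | hx
  · rw [if_pos (by linarith), if_pos (by linarith)]
  · rw [if_neg (by linarith), if_neg (by linarith)]

lemma abs_sub_mul_ite_sub_le_envelope {δ d d0 F F0 x y : ℝ} (hd : |d - d0| ≤ δ)
    (hF : F ∈ Icc (F0 - 1) (F0 + 1)) :
    |(y - F) * ((if x ≤ d then (1 : ℝ) else 0) - (if x ≤ d0 then (1 : ℝ) else 0))|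
      ≤ (|y| + |F0| + 2) * (if x ∈ Icc (d0 - δ) (d0 + δ) then (1 : ℝ) else 0) := by
  by_cases hx : x ∈ Icc (d0 - δ) (d0 + δ)
  · have hF' : |F| ≤ |F0| + 1 := by
      have := abs_sub_abs_le_abs_sub F F0
      have : |F - F0| ≤ 1 := abs_le.mpr ⟨by linarith [hF.1], by linarith [hF.2]⟩
      linarith
    have hyF : |y - F| ≤ |y| + |F0| + 2 := by linarith [abs_sub y F]
    have hind : |(if x ≤ d then (1 : ℝ) else 0) - (if x ≤ d0 then (1 : ℝ) else 0)| ≤ 1 := by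
      split_ifs <;> norm_num
    rw [if_pos hx, mul_one, abs_mul]
    simpa using mul_le_mul hyF hind (abs_nonneg _) (by positivity)
  · rw [if_neg hx, ite_le_eq_ite_le_of_notMem_Icc hd hx, sub_self, mul_zero, abs_zero, mul_zero]

lemma withDensity_apply_le_mul {α : Type*} [MeasurableSpace α] {μ : Measure α}
    {f : α → ENNReal} {s : Set α} (hs : MeasurableSet s) {c : ENNReal}
    (hf : ∀ x ∈ s, f x ≤ c) : μ.withDensity f s ≤ c * μ s := by
  rw [withDensity_apply _ hs, ← setLIntegral_const]
  exact setLIntegral_mono measurable_const hf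

lemma measureReal_preimage_Icc_le {α : Type*} [MeasurableSpace α] {μ : Measure α}
    {X : α → ℝ} (hX : Measurable X) {p : ℝ → ℝ}
    (hdens : μ.map X = volume.withDensity fun x => ENNReal.ofReal (p x))
    {a b C : ℝ} (hab : a ≤ b) (hp : ∀ x ∈ Icc a b, p x ≤ C) :
    μ.real (X ⁻¹' Icc a b) ≤ max C 0 * (b - a) := by
  have hle : μ (X ⁻¹' Icc a b) ≤ ENNReal.ofReal C * ENNReal.ofReal (b - a) := by
    rw [← Measure.map_apply hX measurableSet_Icc, hdens, ← Real.volume_Icc]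
    exact withDensity_apply_le_mul measurableSet_Icc
      fun x hx => ENNReal.ofReal_le_ofReal (hp x hx)
  calc μ.real (X ⁻¹' Icc a b)
      ≤ (ENNReal.ofReal C * ENNReal.ofReal (b - a)).toReal :=
        ENNReal.toReal_mono (by finiteness) hle
    _ = max C 0 * (b - a) := by
        rw [ENNReal.toReal_mul, ENNReal.toReal_ofReal', ENNReal.toReal_ofReal (by linarith)]

lemma integral_sq_mul_ite {Ω : Type*} [MeasurableSpace Ω] (μ : Measure Ω) (g : Ω → ℝ)
    {p : Ω → Prop} [DecidablePred p] (hp : MeasurableSet {ω | p ω}) :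
    ∫ ω, (g ω * if p ω then (1 : ℝ) else 0) ^ 2 ∂μ = ∫ ω in {ω | p ω}, g ω ^ 2 ∂μ := by
  rw [← integral_indicator hp]
  congr 1 with ω
  by_cases h : p ω <;> simp [h]

lemma setIntegral_sq_abs_add_le {Ω : Type*} [MeasurableSpace Ω] {μ : Measure Ω}
    [IsFiniteMeasure μ] {Y : Ω → ℝ} (hY : MemLp Y 2 μ) (A : Set Ω) (c : ℝ) :
    ∫ ω in A, (|Y ω| + c) ^ 2 ∂μ ≤ 2 * ∫ ω in A, Y ω ^ 2 ∂μ + 2 * c ^ 2 * μ.real A := by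
  have hY2 : Integrable (fun ω => Y ω ^ 2) μ := hY.integrable_sq
  have hlhs : Integrable (fun ω => (|Y ω| + c) ^ 2) μ :=
    (hY.norm.add (memLp_const c)).integrable_sq
  have hpt : ∀ ω, (|Y ω| + c) ^ 2 ≤ 2 * Y ω ^ 2 + 2 * c ^ 2 := fun ω => by
    nlinarith [sq_nonneg (|Y ω| - c), sq_abs (Y ω)]
  calc ∫ ω in A, (|Y ω| + c) ^ 2 ∂μ
      ≤ ∫ ω in A, (2 * Y ω ^ 2 + 2 * c ^ 2) ∂μ :=
        setIntegral_mono hlhs.integrableOn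
          ((hY2.const_mul 2).add (integrable_const _)).integrableOn hpt
    _ = 2 * ∫ ω in A, Y ω ^ 2 ∂μ + 2 * c ^ 2 * μ.real A := by
        rw [integral_add (hY2.const_mul 2).integrableOn (integrableOn_const (by finiteness)),
          integral_const_mul, setIntegral_const, smul_eq_mul, mul_comm (μ.real A)]

theorem stmt17_general {Ω : Type*} [MeasureSpace Ω] [IsProbabilityMeasure (ℙ : Measure Ω)]
    (X Y : Ω → ℝ) (hX : Measurable X) (hY2 : MemLp Y 2 ℙ)
    (d0 F0 δ0 : ℝ)
    (pX : ℝ → ℝ)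
    (hdens : Measure.map X ℙ
      = (volume : Measure ℝ).withDensity fun x => ENNReal.ofReal (pX x))
    (Cp : ℝ) (hCp : ∀ x ∈ Set.Icc (d0 - δ0) (d0 + δ0), pX x ≤ Cp)
    (C2 : ℝ) (hC2 : ∀ s : Set ℝ, MeasurableSet s → s ⊆ Set.Icc (d0 - δ0) (d0 + δ0) →
      (∫ ω in X ⁻¹' s, (Y ω) ^ 2 ∂ℙ) ≤ C2 * (ℙ (X ⁻¹' s)).toReal) :
    (∀ δ d F x y : ℝ, |d - d0| ≤ δ → F ∈ Set.Icc (F0 - 1) (F0 + 1) →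
      |(y - F) * ((if x ≤ d then (1 : ℝ) else 0) - (if x ≤ d0 then (1 : ℝ) else 0))|
        ≤ (|y| + |F0| + 2) * (if x ∈ Set.Icc (d0 - δ) (d0 + δ) then (1 : ℝ) else 0)) ∧
    (∃ C : ℝ, ∀ δ : ℝ, 0 < δ → δ < δ0 →
      (∫ ω, ((|Y ω| + |F0| + 2)
          * (if X ω ∈ Set.Icc (d0 - δ) (d0 + δ) then (1 : ℝ) else 0)) ^ 2 ∂ℙ)
        ≤ C * δ) := by
  refine ⟨fun δ d F x y hd hF => abs_sub_mul_ite_sub_le_envelope hd hF,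
    (2 * max C2 0 + 2 * (|F0| + 2) ^ 2) * (2 * max Cp 0), fun δ hδ hδδ0 => ?_⟩
  set S := Icc (d0 - δ) (d0 + δ)
  have hS : S ⊆ Icc (d0 - δ0) (d0 + δ0) := Icc_subset_Icc (by linarith) (by linarith)
  have hPS : (ℙ : Measure Ω).real (X ⁻¹' S) ≤ max Cp 0 * (2 * δ) := by
    convert measureReal_preimage_Icc_le hX hdens (by linarith) fun x hx => hCp x (hS hx)
      using 2
    ring
  have hYS : ∫ ω in X ⁻¹' S, Y ω ^ 2 ∂ℙ ≤ max C2 0 * (ℙ : Measure Ω).real (X ⁻¹' S) :=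
    (hC2 S measurableSet_Icc hS).trans
      (mul_le_mul_of_nonneg_right (le_max_left _ _) measureReal_nonneg)
  simp_rw [add_assoc |_| |F0|]
  rw [integral_sq_mul_ite ℙ _ (hX measurableSet_Icc)]
  calc ∫ ω in X ⁻¹' S, (|Y ω| + (|F0| + 2)) ^ 2 ∂ℙ
      ≤ 2 * ∫ ω in X ⁻¹' S, Y ω ^ 2 ∂ℙ + 2 * (|F0| + 2) ^ 2 * (ℙ : Measure Ω).real (X ⁻¹' S) :=
        setIntegral_sq_abs_add_le hY2 _ _
    _ ≤ (2 * max C2 0 + 2 * (|F0| + 2) ^ 2) * (ℙ : Measure Ω).real (X ⁻¹' S) := by linarith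
    _ ≤ (2 * max C2 0 + 2 * (|F0| + 2) ^ 2) * (max Cp 0 * (2 * δ)) := by gcongr
    _ = _ := by ring

/-- the envelope function
`M_δ(x,y) = (|y| + |F₀| + 2) 1(x ∈ [d⁰-δ, d⁰+δ])` dominates every function
`(y - F)(1(x ≤ d) - 1(x ≤ d⁰))` with `|d - d⁰| ≤ δ`, `F ∈ [F₀-1, F₀+1]`; and if the
conditional second moment of `Y` given `X` and the density `p_X` are bounded near `d⁰`,
then `E[M_δ(X,Y)²] ≤ C δ` for all `δ < δ₀`, with `C` independent of `δ`. -/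
theorem stmt17 {Ω : Type*} [MeasureSpace Ω] [IsProbabilityMeasure (ℙ : Measure Ω)]
    (X Y : Ω → ℝ) (hX : Measurable X) (hYm : Measurable Y) (hY2 : MemLp Y 2 ℙ)
    (d0 F0 δ0 : ℝ) (hδ0 : 0 < δ0)
    (pX : ℝ → ℝ) (hpm : Measurable pX) (hp0 : ∀ x, 0 ≤ pX x)
    (hdens : Measure.map X ℙ
      = (volume : Measure ℝ).withDensity fun x => ENNReal.ofReal (pX x))
    (Cp : ℝ) (hCp : ∀ x ∈ Set.Icc (d0 - δ0) (d0 + δ0), pX x ≤ Cp)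
    (C2 : ℝ) (hC2 : ∀ s : Set ℝ, MeasurableSet s → s ⊆ Set.Icc (d0 - δ0) (d0 + δ0) →
      (∫ ω in X ⁻¹' s, (Y ω) ^ 2 ∂ℙ) ≤ C2 * (ℙ (X ⁻¹' s)).toReal) :
    (∀ δ d F x y : ℝ, |d - d0| ≤ δ → F ∈ Set.Icc (F0 - 1) (F0 + 1) →
      |(y - F) * ((if x ≤ d then (1 : ℝ) else 0) - (if x ≤ d0 then (1 : ℝ) else 0))|
        ≤ (|y| + |F0| + 2) * (if x ∈ Set.Icc (d0 - δ) (d0 + δ) then (1 : ℝ) else 0)) ∧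
    (∃ C : ℝ, ∀ δ : ℝ, 0 < δ → δ < δ0 →
      (∫ ω, ((|Y ω| + |F0| + 2)
          * (if X ω ∈ Set.Icc (d0 - δ) (d0 + δ) then (1 : ℝ) else 0)) ^ 2 ∂ℙ)
        ≤ C * δ) :=
  stmt17_general X Y hX hY2 d0 F0 δ0 pX hdens Cp hCp C2 hC2
end
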